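/- Discrete energy / energy dissipation inequality: if (c, μ) is a solution of the one-step scheme such that c_{i,K} > 0 for every K ∈ V and i ∈ {1,2}, then (E(c) − E(c⁰))/Δt + D(c,μ) ≤ 0. -/

import Mathlib

open Finset

/-- Logarithmic-mean edge value: `lm a b = a` if `a = b ≥ 0`, `0` if `min a b ≤ 0`,
and `(a - b)/(log a - log b)` otherwise. -/
noncomputable def lm (a b : ℝ) : ℝ :=
  if a = b ∧ 0 ≤ a then a
  else if min a b ≤ 0 then 0
  else (a - b) / (Real.log a - Real.log b)

/-- Entropy function `H(c) = c log c - c + 1` (note `H 0 = 1` since `Real.log 0 = 0`). -/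
noncomputable def ent (c : ℝ) : ℝ := c * Real.log c - c + 1

/-- Sum of `f L` over the neighbours `L` of `K`, i.e. over the `L` with `(K, L) ∈ E`. -/
noncomputable def nbrSum {V : Type*} [Fintype V] [DecidableEq V]
    (E : Finset (V × V)) (K : V) (f : V → ℝ) : ℝ :=
  ∑ L ∈ Finset.univ.filter (fun L => (K, L) ∈ E), f L

/-- Sum of a symmetric quantity `f K L` over the unordered edges `{K, L}`, where the
edge set `E` is recorded as a symmetric finset of ordered pairs: each unordered edge
appears as both `(K, L)` and `(L, K)`, whence the division by `2`. -/
noncomputable def edgeSum {V : Type*} (E : Finset (V × V)) (f : V → V → ℝ) : ℝ :=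
  (∑ p ∈ E, f p.1 p.2) / 2

/-- The one-step finite-volume scheme: equations (i) for both phases, (ii), (iii), (iv). -/
def OneStepScheme {V : Type*} [Fintype V] [DecidableEq V]
    (E : Finset (V × V)) (m : V → ℝ) (τ : V → V → ℝ)
    (Δt α κ η₁ η₂ θ₁ θ₂ : ℝ) (Ψ₁ Ψ₂ : V → ℝ)
    (c₁₀ c₂₀ c₁ c₂ μ₁ μ₂ : V → ℝ) : Prop :=
  (∀ K : V,
    m K * (c₁ K - c₁₀ K) / Δt
      + nbrSum E K (fun L =>
          τ K L * (lm (c₁ K) (c₁ L) / η₁ * (μ₁ K + Ψ₁ K - μ₁ L - Ψ₁ L)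
            + θ₁ * (c₁ K - c₁ L))) = 0) ∧
  (∀ K : V,
    m K * (c₂ K - c₂₀ K) / Δt
      + nbrSum E K (fun L =>
          τ K L * (lm (c₂ K) (c₂ L) / η₂ * (μ₂ K + Ψ₂ K - μ₂ L - Ψ₂ L)
            + θ₂ * (c₂ K - c₂ L))) = 0) ∧
  (∀ K : V,
    μ₁ K - μ₂ K
      = α / m K * nbrSum E K (fun L => τ K L * (c₁ K - c₁ L))
        + κ * (1 - 2 * c₁₀ K)) ∧
  (∀ K : V, c₁ K + c₂ K = 1) ∧
  (∑ K : V, m K * (c₁ K * μ₁ K + c₂ K * μ₂ K) = 0)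

/-- The discrete energy `𝔈(c)`. -/
noncomputable def discreteEnergy {V : Type*} [Fintype V]
    (E : Finset (V × V)) (m : V → ℝ) (τ : V → V → ℝ)
    (α κ η₁ η₂ θ₁ θ₂ : ℝ) (Ψ₁ Ψ₂ : V → ℝ) (c₁ c₂ : V → ℝ) : ℝ :=
  α / 2 * edgeSum E (fun K L => τ K L * (c₁ K - c₁ L) ^ 2)
    + ∑ K : V, m K * (κ * c₁ K * c₂ K
        + (c₁ K * Ψ₁ K + θ₁ * η₁ * ent (c₁ K))
        + (c₂ K * Ψ₂ K + θ₂ * η₂ * ent (c₂ K)))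

/-- The discrete dissipation `𝔇(c, μ)`. -/
noncomputable def discreteDissipation {V : Type*}
    (E : Finset (V × V)) (τ : V → V → ℝ)
    (η₁ η₂ θ₁ θ₂ : ℝ) (Ψ₁ Ψ₂ : V → ℝ) (c₁ c₂ μ₁ μ₂ : V → ℝ) : ℝ :=
  edgeSum E (fun K L => τ K L * (lm (c₁ K) (c₁ L) / η₁)
      * (μ₁ K + Ψ₁ K + θ₁ * η₁ * Real.log (c₁ K)
          - μ₁ L - Ψ₁ L - θ₁ * η₁ * Real.log (c₁ L)) ^ 2)
  + edgeSum E (fun K L => τ K L * (lm (c₂ K) (c₂ L) / η₂)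
      * (μ₂ K + Ψ₂ K + θ₂ * η₂ * Real.log (c₂ K)
          - μ₂ L - Ψ₂ L - θ₂ * η₂ * Real.log (c₂ L)) ^ 2)

/-! Test equation (i) of phase `i` with its total potential `wᵢ = μᵢ + Ψᵢ + θᵢηᵢ log cᵢ` and
sum by parts: since `lm(c_K, c_L) (log c_K - log c_L) = c_K - c_L`, the flux across an edge is
`τ lm / ηᵢ` times the jump of `wᵢ`, so `∑_K wᵢ m_K (cᵢ - c⁰ᵢ) = -Δt Dᵢ`. On the other side, the
gradient and entropy parts of the energy are convex and the interaction `κ c₁ (1 - c₁)` is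
concave, which is why (ii) evaluates it at `c⁰`: the energy increment is at most the derivative
of the convex parts at `c` plus that of the concave part at `c⁰`, applied to `c - c⁰`, and by (ii)
and `c₂ - c⁰₂ = -(c₁ - c⁰₁)` this is `∑_K ∑ᵢ wᵢ m_K (cᵢ - c⁰ᵢ)`. -/

lemma lm_comm (a b : ℝ) : lm a b = lm b a := by
  unfold lm
  by_cases h : a = b
  · subst h; rfl
  · simp only [h, Ne.symm h, false_and, if_false, min_comm a b]
    split
    · rfl
    · rw [← neg_sub a b, ← neg_sub (Real.log a) (Real.log b), neg_div_neg_eq]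

lemma lm_mul_log_sub_log {a b : ℝ} (ha : 0 < a) (hb : 0 < b) :
    lm a b * (Real.log a - Real.log b) = a - b := by
  unfold lm
  by_cases h : a = b
  · simp [h]
  · have hlog : Real.log a - Real.log b ≠ 0 := sub_ne_zero.mpr fun he =>
      h (Real.log_injOn_pos (Set.mem_Ioi.mpr ha) (Set.mem_Ioi.mpr hb) he)
    simp only [h, false_and, if_false, not_le.mpr (lt_min ha hb)]
    exact div_mul_cancel₀ _ hlog

lemma ent_sub_le_sub_mul_log {a b : ℝ} (ha : 0 < a) (hb : 0 ≤ b) :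
    ent a - ent b ≤ (a - b) * Real.log a := by
  unfold ent
  rcases hb.eq_or_lt with rfl | hb
  · simp only [Real.log_zero]
    linarith
  · have hlog : Real.log a - Real.log b ≤ a / b - 1 := by
      rw [← Real.log_div ha.ne' hb.ne']
      exact Real.log_le_sub_one_of_pos (div_pos ha hb)
    have key : b * (Real.log a - Real.log b) ≤ a - b :=
      calc _ ≤ b * (a / b - 1) := mul_le_mul_of_nonneg_left hlog hb.le
        _ = a - b := by field_simp
    linear_combination key

lemma cellEnergy_sub_le {a₁ a₂ b₁ b₂ : ℝ} (ha₁ : 0 < a₁) (ha₂ : 0 < a₂) (hb₁ : 0 ≤ b₁)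
    (hb₂ : 0 ≤ b₂) (ha : a₁ + a₂ = 1) (hb : b₁ + b₂ = 1) {κ s₁ s₂ : ℝ} (hκ : 0 ≤ κ)
    (hs₁ : 0 ≤ s₁) (hs₂ : 0 ≤ s₂) (Ψ₁ Ψ₂ : ℝ) :
    κ * a₁ * a₂ + (a₁ * Ψ₁ + s₁ * ent a₁) + (a₂ * Ψ₂ + s₂ * ent a₂)
        - (κ * b₁ * b₂ + (b₁ * Ψ₁ + s₁ * ent b₁) + (b₂ * Ψ₂ + s₂ * ent b₂))
      ≤ κ * (1 - 2 * b₁) * (a₁ - b₁) + (Ψ₁ + s₁ * Real.log a₁) * (a₁ - b₁)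
        + (Ψ₂ + s₂ * Real.log a₂) * (a₂ - b₂) := by
  have hent₁ := mul_le_mul_of_nonneg_left (ent_sub_le_sub_mul_log ha₁ hb₁) hs₁
  have hent₂ := mul_le_mul_of_nonneg_left (ent_sub_le_sub_mul_log ha₂ hb₂) hs₂
  have hmix : κ * a₁ * a₂ - κ * b₁ * b₂ ≤ κ * (1 - 2 * b₁) * (a₁ - b₁) := by
    obtain rfl : a₂ = 1 - a₁ := by linarith
    obtain rfl : b₂ = 1 - b₁ := by linarith
    nlinarith [mul_nonneg hκ (sq_nonneg (a₁ - b₁))]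
  linarith

section Graph

variable {V : Type*} [Fintype V] [DecidableEq V] (E : Finset (V × V))

lemma sum_nbrSum (f : V → V → ℝ) :
    ∑ K, nbrSum E K (f K) = ∑ p ∈ E, f p.1 p.2 := by
  simp only [nbrSum, Finset.sum_filter]
  rw [← Fintype.sum_prod_type' (fun K L => if (K, L) ∈ E then f K L else 0)]
  simp

lemma sum_mul_nbrSum_eq_edgeSum (hE : ∀ K L, (K, L) ∈ E ↔ (L, K) ∈ E) {F : V → V → ℝ}
    (hF : ∀ K L, (K, L) ∈ E → F L K = -F K L) (w : V → ℝ) :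
    ∑ K, w K * nbrSum E K (F K) = edgeSum E (fun K L => (w K - w L) * F K L) := by
  have hswap : ∑ p ∈ E, w p.2 * F p.1 p.2 = -∑ p ∈ E, w p.1 * F p.1 p.2 := by
    rw [← Finset.sum_neg_distrib]
    refine Finset.sum_nbij' Prod.swap Prod.swap (by simp [hE]) (by simp [hE]) (by simp)
      (by simp) fun p hp => ?_
    simp [hF p.1 p.2 hp]
  have hleft : ∑ K, w K * nbrSum E K (F K) = ∑ p ∈ E, w p.1 * F p.1 p.2 := by
    simp only [nbrSum, Finset.mul_sum]
    exact sum_nbrSum E (fun K L => w K * F K L)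
  simp only [edgeSum, sub_mul, Finset.sum_sub_distrib, hleft, hswap]
  ring

lemma edgeSum_sq_sub_edgeSum_sq_le (hE : ∀ K L, (K, L) ∈ E ↔ (L, K) ∈ E) {τ : V → V → ℝ}
    (hτ : ∀ K L, (K, L) ∈ E → 0 ≤ τ K L) (hτsym : ∀ K L, τ K L = τ L K) (u v : V → ℝ) :
    edgeSum E (fun K L => τ K L * (u K - u L) ^ 2) - edgeSum E (fun K L => τ K L * (v K - v L) ^ 2)
      ≤ 2 * ∑ K, (u K - v K) * nbrSum E K (fun L => τ K L * (u K - u L)) := by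
  rw [sum_mul_nbrSum_eq_edgeSum E hE (fun K L _ => by rw [hτsym]; ring)]
  simp only [edgeSum, ← sub_div, ← Finset.sum_sub_distrib]
  rw [mul_div_cancel₀ _ two_ne_zero, div_le_iff₀ two_pos, Finset.sum_mul]
  gcongr with p hp
  nlinarith [mul_nonneg (hτ p.1 p.2 hp) (sq_nonneg (u p.1 - u p.2 - (v p.1 - v p.2)))]

noncomputable def phaseDissipation (τ : V → V → ℝ) (η θ : ℝ) (Ψ c μ : V → ℝ) : ℝ :=
  edgeSum E (fun K L => τ K L * (lm (c K) (c L) / η)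
      * (μ K + Ψ K + θ * η * Real.log (c K) - μ L - Ψ L - θ * η * Real.log (c L)) ^ 2)

lemma sum_potential_mul_eq_neg_phaseDissipation (hE : ∀ K L, (K, L) ∈ E ↔ (L, K) ∈ E)
    {τ : V → V → ℝ} (hτsym : ∀ K L, τ K L = τ L K) {Δt η θ : ℝ} (hΔt : Δt ≠ 0) (hη : η ≠ 0)
    {m Ψ c₀ c μ : V → ℝ} (hc : ∀ K, 0 < c K)
    (heq : ∀ K, m K * (c K - c₀ K) / Δt
      + nbrSum E K (fun L => τ K L * (lm (c K) (c L) / η * (μ K + Ψ K - μ L - Ψ L)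
          + θ * (c K - c L))) = 0) :
    ∑ K, (μ K + Ψ K + θ * η * Real.log (c K)) * (m K * (c K - c₀ K))
      = -(Δt * phaseDissipation E τ η θ Ψ c μ) := by
  set w : V → ℝ := fun K => μ K + Ψ K + θ * η * Real.log (c K)
  set F : V → V → ℝ := fun K L => τ K L * (lm (c K) (c L) / η) * (w K - w L)
  have hflux : ∀ K L, τ K L * (lm (c K) (c L) / η * (μ K + Ψ K - μ L - Ψ L)
      + θ * (c K - c L)) = F K L := by
    intro K L
    have hlm := lm_mul_log_sub_log (hc K) (hc L)
    simp only [F, w]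
    field_simp
    linear_combination (-(τ K L * θ * η)) * hlm
  have hF : ∀ K L, (K, L) ∈ E → F L K = -F K L := fun K L _ => by
    simp only [F]
    rw [hτsym, lm_comm]
    ring
  calc ∑ K, w K * (m K * (c K - c₀ K))
      = -(Δt * ∑ K, w K * nbrSum E K (F K)) := by
        rw [Finset.mul_sum, ← Finset.sum_neg_distrib]
        refine Finset.sum_congr rfl fun K _ => ?_
        have hK := heq K
        simp only [hflux] at hK
        field_simp at hK
        linear_combination w K * hK
    _ = -(Δt * phaseDissipation E τ η θ Ψ c μ) := by
        have hsq : (fun K L => (w K - w L) * F K L) = fun K L => τ K L * (lm (c K) (c L) / η)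
            * (μ K + Ψ K + θ * η * Real.log (c K) - μ L - Ψ L - θ * η * Real.log (c L)) ^ 2 := by
          funext K L
          simp only [F, w]
          ring
        rw [sum_mul_nbrSum_eq_edgeSum E hE hF, hsq, phaseDissipation]

lemma discreteEnergy_sub_le (hE : ∀ K L, (K, L) ∈ E ↔ (L, K) ∈ E) {τ : V → V → ℝ}
    (hτ : ∀ K L, (K, L) ∈ E → 0 ≤ τ K L) (hτsym : ∀ K L, τ K L = τ L K) {m : V → ℝ}
    (hm : ∀ K, 0 ≤ m K) {α κ η₁ η₂ θ₁ θ₂ : ℝ} (hα : 0 ≤ α) (hκ : 0 ≤ κ)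
    (hθη₁ : 0 ≤ θ₁ * η₁) (hθη₂ : 0 ≤ θ₂ * η₂) (Ψ₁ Ψ₂ : V → ℝ) {c₁₀ c₂₀ c₁ c₂ : V → ℝ}
    (hc₁ : ∀ K, 0 < c₁ K) (hc₂ : ∀ K, 0 < c₂ K) (hc₁₀ : ∀ K, 0 ≤ c₁₀ K)
    (hc₂₀ : ∀ K, 0 ≤ c₂₀ K) (hc : ∀ K, c₁ K + c₂ K = 1) (hc₀ : ∀ K, c₁₀ K + c₂₀ K = 1) :
    discreteEnergy E m τ α κ η₁ η₂ θ₁ θ₂ Ψ₁ Ψ₂ c₁ c₂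
        - discreteEnergy E m τ α κ η₁ η₂ θ₁ θ₂ Ψ₁ Ψ₂ c₁₀ c₂₀
      ≤ α * ∑ K, (c₁ K - c₁₀ K) * nbrSum E K (fun L => τ K L * (c₁ K - c₁ L))
        + ∑ K, m K * (κ * (1 - 2 * c₁₀ K) * (c₁ K - c₁₀ K)
          + (Ψ₁ K + θ₁ * η₁ * Real.log (c₁ K)) * (c₁ K - c₁₀ K)
          + (Ψ₂ K + θ₂ * η₂ * Real.log (c₂ K)) * (c₂ K - c₂₀ K)) := by
  have hgrad := mul_le_mul_of_nonneg_left
    (edgeSum_sq_sub_edgeSum_sq_le E hE hτ hτsym c₁ c₁₀) hα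
  have hcell : ∑ K, m K * (κ * c₁ K * c₂ K
        + (c₁ K * Ψ₁ K + θ₁ * η₁ * ent (c₁ K)) + (c₂ K * Ψ₂ K + θ₂ * η₂ * ent (c₂ K)))
      - ∑ K, m K * (κ * c₁₀ K * c₂₀ K
        + (c₁₀ K * Ψ₁ K + θ₁ * η₁ * ent (c₁₀ K)) + (c₂₀ K * Ψ₂ K + θ₂ * η₂ * ent (c₂₀ K)))
      ≤ ∑ K, m K * (κ * (1 - 2 * c₁₀ K) * (c₁ K - c₁₀ K)
          + (Ψ₁ K + θ₁ * η₁ * Real.log (c₁ K)) * (c₁ K - c₁₀ K)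
          + (Ψ₂ K + θ₂ * η₂ * Real.log (c₂ K)) * (c₂ K - c₂₀ K)) := by
    rw [← Finset.sum_sub_distrib]
    gcongr with K
    rw [← mul_sub]
    exact mul_le_mul_of_nonneg_left (cellEnergy_sub_le (hc₁ K) (hc₂ K) (hc₁₀ K) (hc₂₀ K)
      (hc K) (hc₀ K) hκ hθη₁ hθη₂ (Ψ₁ K) (Ψ₂ K)) (hm K)
  rw [discreteEnergy, discreteEnergy]
  linarith

lemma firstVariation_eq_sum_potential_mul {m : V → ℝ} (hm : ∀ K, m K ≠ 0) (τ : V → V → ℝ)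
    {α κ η₁ η₂ θ₁ θ₂ : ℝ} {Ψ₁ Ψ₂ c₁₀ c₂₀ c₁ c₂ μ₁ μ₂ : V → ℝ}
    (hμ : ∀ K, μ₁ K - μ₂ K
      = α / m K * nbrSum E K (fun L => τ K L * (c₁ K - c₁ L)) + κ * (1 - 2 * c₁₀ K))
    (hc : ∀ K, c₁ K + c₂ K = 1) (hc₀ : ∀ K, c₁₀ K + c₂₀ K = 1) :
    α * ∑ K, (c₁ K - c₁₀ K) * nbrSum E K (fun L => τ K L * (c₁ K - c₁ L))
        + ∑ K, m K * (κ * (1 - 2 * c₁₀ K) * (c₁ K - c₁₀ K)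
          + (Ψ₁ K + θ₁ * η₁ * Real.log (c₁ K)) * (c₁ K - c₁₀ K)
          + (Ψ₂ K + θ₂ * η₂ * Real.log (c₂ K)) * (c₂ K - c₂₀ K))
      = ∑ K, (μ₁ K + Ψ₁ K + θ₁ * η₁ * Real.log (c₁ K)) * (m K * (c₁ K - c₁₀ K))
        + ∑ K, (μ₂ K + Ψ₂ K + θ₂ * η₂ * Real.log (c₂ K)) * (m K * (c₂ K - c₂₀ K)) := by
  simp only [Finset.mul_sum, ← Finset.sum_add_distrib]
  refine Finset.sum_congr rfl fun K _ => ?_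
  have hμK : m K * (μ₁ K - μ₂ K)
      = α * nbrSum E K (fun L => τ K L * (c₁ K - c₁ L)) + m K * (κ * (1 - 2 * c₁₀ K)) := by
    rw [hμ K]
    field_simp [hm K]
  have hincr : c₂ K - c₂₀ K = -(c₁ K - c₁₀ K) := by linarith [hc K, hc₀ K]
  rw [hincr]
  linear_combination (c₁₀ K - c₁ K) * hμK

end Graph

theorem energy_dissipation_one_step_general
    {V : Type*} [Fintype V] [DecidableEq V]
    (E : Finset (V × V)) (m : V → ℝ) (τ : V → V → ℝ)
    (Δt α κ η₁ η₂ θ₁ θ₂ : ℝ) (Ψ₁ Ψ₂ : V → ℝ)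
    (c₁₀ c₂₀ c₁ c₂ μ₁ μ₂ : V → ℝ)
    (hEsym : ∀ K L : V, (K, L) ∈ E ↔ (L, K) ∈ E)
    (hm : ∀ K, 0 < m K)
    (hτpos : ∀ K L, (K, L) ∈ E → 0 < τ K L)
    (hτsym : ∀ K L, τ K L = τ L K)
    (hΔt : 0 < Δt) (hα : 0 < α) (hκ : 0 < κ)
    (hη₁ : 0 < η₁) (hη₂ : 0 < η₂) (hθ₁ : 0 < θ₁) (hθ₂ : 0 < θ₂)
    (hc₁₀ : ∀ K, c₁₀ K ∈ Set.Icc (0:ℝ) 1)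
    (hc₂₀ : ∀ K, c₂₀ K ∈ Set.Icc (0:ℝ) 1)
    (hc₀sum : ∀ K, c₁₀ K + c₂₀ K = 1)
    (hsol : OneStepScheme E m τ Δt α κ η₁ η₂ θ₁ θ₂ Ψ₁ Ψ₂ c₁₀ c₂₀ c₁ c₂ μ₁ μ₂)
    (hpos : ∀ K : V, 0 < c₁ K ∧ 0 < c₂ K) :
    (discreteEnergy E m τ α κ η₁ η₂ θ₁ θ₂ Ψ₁ Ψ₂ c₁ c₂
        - discreteEnergy E m τ α κ η₁ η₂ θ₁ θ₂ Ψ₁ Ψ₂ c₁₀ c₂₀) / Δt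
      + discreteDissipation E τ η₁ η₂ θ₁ θ₂ Ψ₁ Ψ₂ c₁ c₂ μ₁ μ₂ ≤ 0 := by
  obtain ⟨hscheme₁, hscheme₂, hμ, hc, -⟩ := hsol
  have hc₁ K : 0 < c₁ K := (hpos K).1
  have hc₂ K : 0 < c₂ K := (hpos K).2
  have henergy := discreteEnergy_sub_le E hEsym (fun K L h => (hτpos K L h).le) hτsym
    (fun K => (hm K).le) hα.le hκ.le (mul_pos hθ₁ hη₁).le (mul_pos hθ₂ hη₂).le Ψ₁ Ψ₂ hc₁ hc₂
    (fun K => (hc₁₀ K).1) (fun K => (hc₂₀ K).1) hc hc₀sum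
  rw [firstVariation_eq_sum_potential_mul E (fun K => (hm K).ne') τ hμ hc hc₀sum,
    sum_potential_mul_eq_neg_phaseDissipation E hEsym hτsym hΔt.ne' hη₁.ne' hc₁ hscheme₁,
    sum_potential_mul_eq_neg_phaseDissipation E hEsym hτsym hΔt.ne' hη₂.ne' hc₂ hscheme₂]
    at henergy
  have hdiss : discreteDissipation E τ η₁ η₂ θ₁ θ₂ Ψ₁ Ψ₂ c₁ c₂ μ₁ μ₂
      = phaseDissipation E τ η₁ θ₁ Ψ₁ c₁ μ₁ + phaseDissipation E τ η₂ θ₂ Ψ₂ c₂ μ₂ := rfl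
  rw [hdiss, div_add' _ _ _ hΔt.ne']
  exact div_nonpos_of_nonpos_of_nonneg (by linarith) hΔt.le

/-- Discrete energy / energy dissipation inequality. -/
theorem energy_dissipation_one_step
    {V : Type*} [Fintype V] [DecidableEq V] [Nonempty V]
    (E : Finset (V × V)) (m : V → ℝ) (τ : V → V → ℝ)
    (Δt α κ η₁ η₂ θ₁ θ₂ : ℝ) (Ψ₁ Ψ₂ : V → ℝ)
    (c₁₀ c₂₀ c₁ c₂ μ₁ μ₂ : V → ℝ)
    (hEirr : ∀ K : V, (K, K) ∉ E)
    (hEsym : ∀ K L : V, (K, L) ∈ E ↔ (L, K) ∈ E)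
    (hconn : (SimpleGraph.fromRel (fun K L : V => (K, L) ∈ E)).Connected)
    (hm : ∀ K, 0 < m K)
    (hτpos : ∀ K L, (K, L) ∈ E → 0 < τ K L)
    (hτsym : ∀ K L, τ K L = τ L K)
    (hΔt : 0 < Δt) (hα : 0 < α) (hκ : 0 < κ)
    (hη₁ : 0 < η₁) (hη₂ : 0 < η₂) (hθ₁ : 0 < θ₁) (hθ₂ : 0 < θ₂)
    (hc₁₀ : ∀ K, c₁₀ K ∈ Set.Icc (0:ℝ) 1)
    (hc₂₀ : ∀ K, c₂₀ K ∈ Set.Icc (0:ℝ) 1)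
    (hc₀sum : ∀ K, c₁₀ K + c₂₀ K = 1)
    (hsol : OneStepScheme E m τ Δt α κ η₁ η₂ θ₁ θ₂ Ψ₁ Ψ₂ c₁₀ c₂₀ c₁ c₂ μ₁ μ₂)
    (hpos : ∀ K : V, 0 < c₁ K ∧ 0 < c₂ K) :
    (discreteEnergy E m τ α κ η₁ η₂ θ₁ θ₂ Ψ₁ Ψ₂ c₁ c₂
        - discreteEnergy E m τ α κ η₁ η₂ θ₁ θ₂ Ψ₁ Ψ₂ c₁₀ c₂₀) / Δt
      + discreteDissipation E τ η₁ η₂ θ₁ θ₂ Ψ₁ Ψ₂ c₁ c₂ μ₁ μ₂ ≤ 0 :=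
  energy_dissipation_one_step_general E m τ Δt α κ η₁ η₂ θ₁ θ₂ Ψ₁ Ψ₂ c₁₀ c₂₀ c₁ c₂ μ₁ μ₂ hEsym hm
    hτpos hτsym hΔt hα hκ hη₁ hη₂ hθ₁ hθ₂ hc₁₀ hc₂₀ hc₀sum hsol hpos
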